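/- There is a constant C > 0 such that for all sufficiently large T, ∫_T^{2T} |u_T(2t)| · |u_T''(2t)| dt ≤ C · T, where u_T(t) = Σ_{n≤T} cos(t log n)/n and u_T''(t) = −Σ_{n≤T} cos(t log n)(log n)²/n is its second derivative. -/

import Mathlib

/-!
Up to sign, `u_T(2t)` and `u_T''(2t)` are cosine polynomials `∑ cₙ cos (t · 2 log n)` over
`n ≤ T` with `|cₙ| ≤ (1 + log n)² / n`, so by AM-GM it suffices to bound the mean square of each
over `[T, 2T]`. Expanding the square, the diagonal contributes at most `T ∑ cₙ²`, which is `O(T)`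
because `((1 + log n)² / n)²` is summable. An off-diagonal integral is at most
`2 / |log n - log m|`, since the integral of a cosine is bounded by twice the inverse frequency;
with `m (log m - log n) ≥ m - n` the off-diagonal terms add up to at most
`2 (1 + log T)⁴ H_N²`, where the harmonic number `H_N` is at most `1 + log T`; this is
`O((log T)⁶) = o(T)`.
-/

open Real Filter Finset Asymptotics

lemma abs_integral_cos_mul_le (a b : ℝ) {d : ℝ} (hd : d ≠ 0) :
    |∫ t in a..b, cos (t * d)| ≤ 2 / |d| := by
  rw [intervalIntegral.integral_comp_mul_right cos hd, integral_cos, smul_eq_mul, abs_mul,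
    abs_inv, ← div_eq_inv_mul]
  gcongr
  calc |sin (b * d) - sin (a * d)| ≤ |sin (b * d)| + |sin (a * d)| := abs_sub _ _
    _ ≤ 2 := by linarith [abs_sin_le_one (b * d), abs_sin_le_one (a * d)]

lemma abs_integral_cos_mul_cos_mul_le (a b : ℝ) {α β : ℝ} (hα : 0 ≤ α) (hβ : 0 ≤ β)
    (hαβ : α ≠ β) : |∫ t in a..b, cos (t * α) * cos (t * β)| ≤ 2 / |α - β| := by
  have hsub : 0 < |α - β| := abs_pos.mpr (sub_ne_zero.mpr hαβ)
  have hadd : |α - β| ≤ |α + β| := by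
    rw [abs_of_nonneg (by linarith : 0 ≤ α + β)]
    exact abs_sub_le_iff.mpr ⟨by linarith, by linarith⟩
  have hprod : ∀ t, cos (t * α) * cos (t * β) = (cos (t * (α - β)) + cos (t * (α + β))) / 2 := by
    intro t; rw [mul_sub, mul_add, cos_sub, cos_add]; ring
  simp_rw [hprod]
  rw [intervalIntegral.integral_div,
    intervalIntegral.integral_add (Continuous.intervalIntegrable (by fun_prop) _ _)
      (Continuous.intervalIntegrable (by fun_prop) _ _), abs_div, abs_two]
  calc |(∫ t in a..b, cos (t * (α - β))) + ∫ t in a..b, cos (t * (α + β))| / 2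
      ≤ (2 / |α - β| + 2 / |α + β|) / 2 := by
        gcongr
        exact (abs_add_le _ _).trans (add_le_add (abs_integral_cos_mul_le a b (by positivity))
          (abs_integral_cos_mul_le a b (abs_pos.mp (hsub.trans_le hadd))))
    _ ≤ (2 / |α - β| + 2 / |α - β|) / 2 := by gcongr
    _ = 2 / |α - β| := by ring

lemma integral_cos_mul_mul_self_le {a b : ℝ} (hab : a ≤ b) (ω : ℝ) :
    ∫ t in a..b, cos (t * ω) * cos (t * ω) ≤ b - a := by
  calc ∫ t in a..b, cos (t * ω) * cos (t * ω) ≤ ∫ _ in a..b, (1 : ℝ) := by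
        refine intervalIntegral.integral_mono_on hab
          (Continuous.intervalIntegrable (by fun_prop) _ _) intervalIntegrable_const fun t _ => ?_
        rw [← sq]; exact cos_sq_le_one _
    _ = b - a := by simp

lemma integral_sq_sum_mul_cos_le {ι : Type*} [DecidableEq ι] (s : Finset ι) (c ω : ι → ℝ)
    {a b : ℝ} (hab : a ≤ b) (hω : ∀ i ∈ s, 0 ≤ ω i) (hinj : Set.InjOn ω s) :
    ∫ t in a..b, (∑ i ∈ s, c i * cos (t * ω i)) ^ 2 ≤
      (b - a) * ∑ i ∈ s, c i ^ 2 +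
        ∑ i ∈ s, ∑ j ∈ s.erase i, |c i| * |c j| * (2 / |ω i - ω j|) := by
  have hexpand : ∫ t in a..b, (∑ i ∈ s, c i * cos (t * ω i)) ^ 2 =
      ∑ i ∈ s, ∑ j ∈ s, c i * c j * ∫ t in a..b, cos (t * ω i) * cos (t * ω j) := by
    simp_rw [sq, sum_mul_sum, ← intervalIntegral.integral_const_mul]
    rw [intervalIntegral.integral_finsetSum fun i _ =>
      (continuous_finsetSum _ fun j _ => by fun_prop).intervalIntegrable _ _]
    refine sum_congr rfl fun i _ => ?_
    rw [intervalIntegral.integral_finsetSum fun j _ =>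
      Continuous.intervalIntegrable (by fun_prop) _ _]
    exact sum_congr rfl fun j _ => intervalIntegral.integral_congr fun t _ => by ring
  rw [hexpand, mul_sum, ← sum_add_distrib]
  refine sum_le_sum fun i hi => ?_
  rw [← add_sum_erase s _ hi]
  refine add_le_add ?_ (sum_le_sum fun j hj => ?_)
  · rw [← sq, mul_comm]
    exact mul_le_mul_of_nonneg_right (integral_cos_mul_mul_self_le hab _) (sq_nonneg _)
  · obtain ⟨hji, hj⟩ := mem_erase.mp hj
    calc c i * c j * ∫ t in a..b, cos (t * ω i) * cos (t * ω j)
        ≤ |c i * c j * ∫ t in a..b, cos (t * ω i) * cos (t * ω j)| := le_abs_self _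
      _ = |c i| * |c j| * |∫ t in a..b, cos (t * ω i) * cos (t * ω j)| := by
        rw [abs_mul, abs_mul]
      _ ≤ |c i| * |c j| * (2 / |ω i - ω j|) := by
        gcongr
        exact abs_integral_cos_mul_cos_mul_le a b (hω i hi) (hω j hj)
          fun h => hji (hinj hj hi h.symm)

lemma integral_abs_mul_abs_le {f g : ℝ → ℝ} {a b : ℝ} (hab : a ≤ b) (hf : Continuous f)
    (hg : Continuous g) :
    ∫ t in a..b, |f t| * |g t| ≤ ((∫ t in a..b, f t ^ 2) + ∫ t in a..b, g t ^ 2) / 2 := by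
  rw [← intervalIntegral.integral_add (Continuous.intervalIntegrable (by fun_prop) _ _)
    (Continuous.intervalIntegrable (by fun_prop) _ _), ← intervalIntegral.integral_div]
  refine intervalIntegral.integral_mono_on hab (Continuous.intervalIntegrable (by fun_prop) _ _)
    (Continuous.intervalIntegrable (by fun_prop) _ _) fun t _ => ?_
  nlinarith [sq_nonneg (|f t| - |g t|), sq_abs (f t), sq_abs (g t)]

lemma sum_sum_erase_eq_two_nsmul {ι M : Type*} [LinearOrder ι] [AddCommMonoid M]
    (s : Finset ι) (g : ι → ι → M) (hg : ∀ i j, g i j = g j i) :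
    ∑ i ∈ s, ∑ j ∈ s.erase i, g i j = 2 • ∑ i ∈ s, ∑ j ∈ s with i < j, g i j := by
  have hsplit : ∀ i, ∑ j ∈ s.erase i, g i j =
      ∑ j ∈ s with i < j, g i j + ∑ j ∈ s with j < i, g i j := by
    intro i
    rw [← sum_filter_add_sum_filter_not (s.erase i) (i < ·)]
    congr 2 <;> ext j <;> simp only [mem_filter, mem_erase] <;> grind
  have hswap : ∑ i ∈ s, ∑ j ∈ s with j < i, g i j = ∑ i ∈ s, ∑ j ∈ s with i < j, g i j := by
    rw [sum_comm' (t' := s) (s' := fun j => {i ∈ s | j < i})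
      (by simp only [mem_filter]; tauto)]
    simp_rw [hg]
  simp_rw [hsplit, sum_add_distrib, hswap, two_nsmul]

lemma sub_le_mul_log_sub_log {x y : ℝ} (hx : 0 < x) (hy : 0 < y) :
    y - x ≤ y * (log y - log x) := by
  have h := one_sub_inv_le_log_of_pos (div_pos hy hx)
  rw [inv_div, log_div hy.ne' hx.ne'] at h
  have := mul_le_mul_of_nonneg_left h hy.le
  rwa [mul_sub, mul_one, mul_div_cancel₀ _ hy.ne'] at this

lemma sum_Icc_filter_lt_inv_sub_le (N n : ℕ) :
    ∑ m ∈ Icc 1 N with n < m, ((m : ℝ) - n)⁻¹ ≤ harmonic N := by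
  rw [harmonic_eq_sum_Icc]
  push_cast
  have hshift :
      ∑ m ∈ Icc 1 N with n < m, ((m : ℝ) - n)⁻¹ = ∑ k ∈ Icc 1 (N - n), (k : ℝ)⁻¹ := by
    refine sum_nbij' (· - n) (· + n) ?_ ?_ ?_ ?_ fun m hm => ?_
    any_goals intro m hm; simp only [mem_filter, mem_Icc] at hm ⊢; omega
    rw [mem_filter] at hm
    rw [Nat.cast_sub hm.2.le]
  rw [hshift]
  exact sum_le_sum_of_subset_of_nonneg (Icc_subset_Icc le_rfl (Nat.sub_le N n))
    fun k _ _ => by positivity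

lemma inv_mul_abs_log_sub_le {n m : ℕ} (hn : 1 ≤ n) (hnm : n < m) :
    ((n : ℝ) * m * |log n - log m|)⁻¹ ≤ (n : ℝ)⁻¹ * ((m : ℝ) - n)⁻¹ := by
  have hn0 : (0 : ℝ) < n := by exact_mod_cast hn
  have hnm' : (n : ℝ) < m := by exact_mod_cast hnm
  rw [abs_sub_comm, abs_of_pos (sub_pos.mpr (log_lt_log hn0 hnm')), ← mul_inv, mul_assoc]
  have : (0 : ℝ) < m - n := sub_pos.mpr hnm'
  gcongr
  exact sub_le_mul_log_sub_log hn0 (hn0.trans hnm')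

lemma sum_sum_erase_inv_mul_abs_log_sub_le (N : ℕ) :
    ∑ n ∈ Icc 1 N, ∑ m ∈ (Icc 1 N).erase n, ((n : ℝ) * m * |log n - log m|)⁻¹ ≤
      2 * (harmonic N : ℝ) ^ 2 := by
  rw [sum_sum_erase_eq_two_nsmul _ _ fun n m => by rw [abs_sub_comm, mul_comm (n : ℝ)],
    nsmul_eq_mul, Nat.cast_ofNat, sq]
  gcongr
  nth_rw 1 [harmonic_eq_sum_Icc]
  push_cast
  rw [sum_mul]
  refine sum_le_sum fun n hn => ?_
  calc ∑ m ∈ Icc 1 N with n < m, ((n : ℝ) * m * |log n - log m|)⁻¹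
      ≤ ∑ m ∈ Icc 1 N with n < m, (n : ℝ)⁻¹ * ((m : ℝ) - n)⁻¹ :=
        sum_le_sum fun m hm => inv_mul_abs_log_sub_le (mem_Icc.mp hn).1 (mem_filter.mp hm).2
    _ ≤ (n : ℝ)⁻¹ * harmonic N := by
        rw [← mul_sum]
        exact mul_le_mul_of_nonneg_left (sum_Icc_filter_lt_inv_sub_le N n) (by positivity)

lemma isLittleO_one_add_log_pow_rpow (k : ℕ) {s : ℝ} (hs : 0 < s) :
    (fun x : ℝ => (1 + log x) ^ k) =o[atTop] fun x => x ^ s := by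
  have h : (fun x : ℝ => 1 + log x) =O[atTop] log :=
    isLittleO_const_log_atTop.isBigO.add (isBigO_refl _ _)
  refine (h.pow k).trans_isLittleO ?_
  simpa only [rpow_natCast] using isLittleO_log_rpow_rpow_atTop (k : ℝ) hs

noncomputable def logWeight (n : ℕ) : ℝ := (1 + log n) ^ 2 / n

lemma summable_logWeight_sq : Summable fun n => logWeight n ^ 2 := by
  have h : (fun x : ℝ => ((1 + log x) ^ 2 / x) ^ 2) =O[atTop] fun x => x ^ (-3 / 2 : ℝ) := by
    have h4 := ((isLittleO_one_add_log_pow_rpow 4 (by norm_num : (0 : ℝ) < 1 / 2)).isBigO).mul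
      (isBigO_refl (fun x : ℝ => (x ^ 2)⁻¹) atTop)
    refine h4.congr' (Eventually.of_forall fun x => by ring) ?_
    filter_upwards [eventually_gt_atTop 0] with x hx
    rw [show (-3 / 2 : ℝ) = 1 / 2 + -(2 : ℕ) by norm_num, rpow_add hx, rpow_neg hx.le,
      rpow_natCast]
  exact summable_of_isBigO_nat (summable_nat_rpow.mpr (by norm_num)) h.natCast_atTop

lemma logWeight_le {n : ℕ} {T : ℝ} (hn : 1 ≤ n) (hnT : (n : ℝ) ≤ T) :
    logWeight n ≤ (1 + log T) ^ 2 / n := by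
  have hn0 : (0 : ℝ) < n := by exact_mod_cast hn
  have : 0 ≤ log (n : ℝ) := log_natCast_nonneg n
  unfold logWeight
  gcongr

lemma abs_inv_natCast_le_logWeight (n : ℕ) : |(n : ℝ)⁻¹| ≤ logWeight n := by
  have : 0 ≤ log (n : ℝ) := log_natCast_nonneg n
  rw [abs_of_nonneg (by positivity), logWeight, div_eq_mul_inv]
  exact le_mul_of_one_le_left (by positivity) (one_le_pow₀ (by linarith))

lemma abs_log_sq_div_le_logWeight (n : ℕ) : |log n ^ 2 / n| ≤ logWeight n := by
  have : 0 ≤ log (n : ℝ) := log_natCast_nonneg n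
  rw [abs_of_nonneg (by positivity), logWeight]
  gcongr
  linarith

lemma sum_sum_erase_abs_mul_abs_mul_two_div_le {T : ℝ} (hT : 1 ≤ T) (c : ℕ → ℝ)
    (hc : ∀ n, |c n| ≤ logWeight n) :
    ∑ n ∈ Icc 1 ⌊T⌋₊, ∑ m ∈ (Icc 1 ⌊T⌋₊).erase n,
        |c n| * |c m| * (2 / |2 * log n - 2 * log m|) ≤ 2 * (1 + log T) ^ 6 := by
  set S := Icc 1 ⌊T⌋₊
  set L := 1 + log T
  have hcL : ∀ k ∈ S, |c k| ≤ L ^ 2 * (k : ℝ)⁻¹ := fun k hk =>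
    (hc k).trans (div_eq_mul_inv (L ^ 2) (k : ℝ) ▸
      logWeight_le (mem_Icc.mp hk).1 ((Nat.le_floor_iff (by linarith)).mp (mem_Icc.mp hk).2))
  have hharm : (0 : ℝ) ≤ harmonic ⌊T⌋₊ := by
    exact_mod_cast (harmonic_pos (Nat.floor_pos.mpr hT).ne').le
  calc ∑ n ∈ S, ∑ m ∈ S.erase n, |c n| * |c m| * (2 / |2 * log n - 2 * log m|)
      ≤ ∑ n ∈ S, ∑ m ∈ S.erase n, L ^ 4 * ((n : ℝ) * m * |log n - log m|)⁻¹ := by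
        refine sum_le_sum fun n hn => sum_le_sum fun m hm => ?_
        calc |c n| * |c m| * (2 / |2 * log n - 2 * log m|)
            = |c n| * |c m| * |log n - log m|⁻¹ := by
              rw [← mul_sub, abs_mul, abs_two, div_mul_cancel_left₀ two_ne_zero]
          _ ≤ (L ^ 2 * (n : ℝ)⁻¹) * (L ^ 2 * (m : ℝ)⁻¹) * |log n - log m|⁻¹ := by
              gcongr
              exacts [hcL n hn, hcL m (mem_of_mem_erase hm)]
          _ = L ^ 4 * ((n : ℝ) * m * |log n - log m|)⁻¹ := by
              rw [mul_inv, mul_inv]; ring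
    _ = L ^ 4 * ∑ n ∈ S, ∑ m ∈ S.erase n, ((n : ℝ) * m * |log n - log m|)⁻¹ := by
        simp_rw [mul_sum]
    _ ≤ L ^ 4 * (2 * L ^ 2) := by
        gcongr
        refine (sum_sum_erase_inv_mul_abs_log_sub_le _).trans ?_
        gcongr
        exact harmonic_floor_le_one_add_log T hT
    _ = 2 * L ^ 6 := by ring

lemma integral_sq_sum_mul_cos_two_mul_log_le {T : ℝ} (hT : 1 ≤ T) (c : ℕ → ℝ)
    (hc : ∀ n, |c n| ≤ logWeight n) :
    ∫ t in T..2 * T, (∑ n ∈ Icc 1 ⌊T⌋₊, c n * cos (t * (2 * log n))) ^ 2 ≤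
      T * ∑' n, logWeight n ^ 2 + 2 * (1 + log T) ^ 6 := by
  have hinj : Set.InjOn (fun n : ℕ => 2 * log n) (Icc 1 ⌊T⌋₊) := fun n hn m hm h => by
    have hpos : ∀ k ∈ Icc 1 ⌊T⌋₊, (k : ℝ) ∈ Set.Ioi 0 := fun k hk =>
      Set.mem_Ioi.mpr (by exact_mod_cast (mem_Icc.mp hk).1)
    exact_mod_cast log_injOn_pos (hpos n hn) (hpos m hm) (by simpa using h)
  have hdiag : ∑ n ∈ Icc 1 ⌊T⌋₊, c n ^ 2 ≤ ∑' n, logWeight n ^ 2 := by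
    refine (sum_le_sum fun n _ => ?_).trans
      (summable_logWeight_sq.sum_le_tsum _ fun _ _ => sq_nonneg _)
    rw [← sq_abs]
    exact pow_le_pow_left₀ (abs_nonneg _) (hc n) 2
  refine (integral_sq_sum_mul_cos_le _ c _ (by linarith)
    (fun n _ => mul_nonneg zero_le_two (log_natCast_nonneg n)) hinj).trans ?_
  rw [two_mul, add_sub_cancel_right]
  gcongr
  exact sum_sum_erase_abs_mul_abs_mul_two_div_le hT c hc

theorem mixed_integral_u_T_bound :
    ∃ C > 0, ∀ᶠ T : ℝ in atTop,
      (∫ t in T..(2 * T),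
          |∑ n ∈ Finset.Icc 1 ⌊T⌋₊, Real.cos ((2 * t) * Real.log n) / (n : ℝ)| *
          |-∑ n ∈ Finset.Icc 1 ⌊T⌋₊,
              Real.cos ((2 * t) * Real.log n) * (Real.log n) ^ 2 / (n : ℝ)|)
        ≤ C * T := by
  set K := ∑' n, logWeight n ^ 2
  have hK : 0 ≤ K := tsum_nonneg fun _ => sq_nonneg _
  have hlog : ∀ᶠ T : ℝ in atTop, 2 * (1 + log T) ^ 6 ≤ T := by
    filter_upwards [(isLittleO_one_add_log_pow_rpow 6 one_pos).bound
      (by norm_num : (0 : ℝ) < 1 / 2), eventually_ge_atTop 0] with T hbound hT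
    rw [rpow_one, norm_of_nonneg hT] at hbound
    linarith [(le_norm_self _).trans hbound]
  refine ⟨K + 1, by positivity, ?_⟩
  filter_upwards [eventually_ge_atTop 1, hlog] with T hT hlogT
  set u : ℝ → ℝ := fun t => ∑ n ∈ Icc 1 ⌊T⌋₊, (n : ℝ)⁻¹ * cos (t * (2 * log n))
  set v : ℝ → ℝ := fun t => ∑ n ∈ Icc 1 ⌊T⌋₊, (log n ^ 2 / n) * cos (t * (2 * log n))
  have huv : ∀ t, |∑ n ∈ Icc 1 ⌊T⌋₊, cos ((2 * t) * log n) / (n : ℝ)| *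
      |-∑ n ∈ Icc 1 ⌊T⌋₊, cos ((2 * t) * log n) * (log n) ^ 2 / (n : ℝ)| = |u t| * |v t| := by
    intro t
    rw [abs_neg]
    congr 2 <;> refine sum_congr rfl fun n _ => ?_ <;>
      rw [show 2 * t * log n = t * (2 * log n) by ring] <;> ring
  calc _ = ∫ t in T..2 * T, |u t| * |v t| := intervalIntegral.integral_congr fun t _ => huv t
    _ ≤ ((∫ t in T..2 * T, u t ^ 2) + ∫ t in T..2 * T, v t ^ 2) / 2 :=
      integral_abs_mul_abs_le (by linarith) (by fun_prop) (by fun_prop)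
    _ ≤ ((T * K + 2 * (1 + log T) ^ 6) + (T * K + 2 * (1 + log T) ^ 6)) / 2 := by
      gcongr
      · exact integral_sq_sum_mul_cos_two_mul_log_le hT _ abs_inv_natCast_le_logWeight
      · exact integral_sq_sum_mul_cos_two_mul_log_le hT _ abs_log_sq_div_le_logWeight
    _ ≤ (K + 1) * T := by linarith
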